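/- Let n be divisible by 4 with n ≥ 8. There are exactly eight perfect matchings of the torus grid graph G_n having exactly n²/2 flippable pairs, and every other perfect matching of G_n has strictly fewer than n²/2 flippable pairs. The eight maximizers are precisely the matchings obtained by choosing one of the four plaquette sublattices X and one of the two checkerboard assignments, and placing on every plaquette of X a parallel pair whose orientation (horizontal or vertical) alternates in checkerboard fashion over X. -/

import Mathlib

/-!
Dimer configurations (perfect matchings) on the torus grid graph `G_n` with vertex set
`ZMod n × ZMod n`, where `(v, i)` denotes the edge joining `v` and `v + e i`, with
`e 0 = (1,0)` and `e 1 = (0,1)`.  A plaquette is a point `p : ZMod n × ZMod n`, regarded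
as the unit square with corners `p, p+e 0, p+e 1, p+e 0+e 1`.
-/

open scoped Classical
noncomputable section

namespace HQDMT

/-- Vertices (and also plaquettes) of the torus grid graph `G_n`. -/
abbrev VT (n : ℕ) : Type := ZMod n × ZMod n

/-- Edges of `G_n`: `(v, i)` is the edge joining `v` and `v + eT n i`. -/
abbrev ET (n : ℕ) : Type := VT n × Fin 2

/-- The two unit vectors. -/
def eT (n : ℕ) : Fin 2 → VT n := fun i => if i = 0 then (1, 0) else (0, 1)

/-- The endpoints of an edge. -/
def endsT (n : ℕ) (ed : ET n) : Set (VT n) := {ed.1, ed.1 + eT n ed.2}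

/-- `M` is a perfect matching of `G_n`: every vertex lies on exactly one edge of `M`. -/
def IsPMT (n : ℕ) (M : Set (ET n)) : Prop :=
  ∀ w : VT n, ∃! ed : ET n, ed ∈ M ∧ w ∈ endsT n ed

/-- Plaquette `p` hosts a horizontal parallel dimer pair in `M`. -/
def HostsHT (n : ℕ) (M : Set (ET n)) (p : VT n) : Prop :=
  (p, (0 : Fin 2)) ∈ M ∧ (p + (0, 1), (0 : Fin 2)) ∈ M

/-- Plaquette `p` hosts a vertical parallel dimer pair in `M`. -/
def HostsVT (n : ℕ) (M : Set (ET n)) (p : VT n) : Prop :=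
  (p, (1 : Fin 2)) ∈ M ∧ (p + (1, 0), (1 : Fin 2)) ∈ M

/-- Plaquette `p` hosts a parallel pair (horizontal or vertical). -/
def HostsParT (n : ℕ) (M : Set (ET n)) (p : VT n) : Prop := HostsHT n M p ∨ HostsVT n M p

/-- The four boundary edges of the plaquette `p`. -/
def plaqEdgesT (n : ℕ) (p : VT n) : Set (ET n) :=
  {(p, (0 : Fin 2)), (p + (0, 1), (0 : Fin 2)), (p, (1 : Fin 2)), (p + (1, 0), (1 : Fin 2))}

/-- Flipping the plaquette `p`: the horizontal pair is replaced by the vertical one, or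
vice versa (as a set operation, the symmetric difference with the plaquette's boundary). -/
def flipT (n : ℕ) (M : Set (ET n)) (p : VT n) : Set (ET n) := symmDiff M (plaqEdgesT n p)

/-- `{p, p + 2 eT n i}` is a flippable pair of `M`: one of the two plaquettes hosts a
horizontal pair and the other a vertical pair. -/
def FlipPairT (n : ℕ) (M : Set (ET n)) (p : VT n) (i : Fin 2) : Prop :=
  (HostsHT n M p ∧ HostsVT n M (p + eT n i + eT n i)) ∨
  (HostsVT n M p ∧ HostsHT n M (p + eT n i + eT n i))

/-- The hQDM move at the pair `{p, p + 2 eT n i}`: both plaquettes are flipped. -/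
def moveT (n : ℕ) (M : Set (ET n)) (p : VT n) (i : Fin 2) : Set (ET n) :=
  symmDiff M (plaqEdgesT n p ∪ plaqEdgesT n (p + eT n i + eT n i))

/-- Krylov equivalence: the equivalence relation on dimer configurations generated by
hQDM moves at flippable pairs.  The Krylov class of `M` is `{M' | KrylovT n M M'}`. -/
def KrylovT (n : ℕ) (M M' : Set (ET n)) : Prop :=
  Relation.EqvGen (fun A B => ∃ p i, FlipPairT n A p i ∧ B = moveT n A p i) M M'

/-- The set of flippable pairs of `M`, as unordered pairs `{p, p + 2 eT n i}` of plaquettes. -/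
def flipPairsT (n : ℕ) (M : Set (ET n)) : Set (Set (VT n)) :=
  {S : Set (VT n) | ∃ p i, FlipPairT n M p i ∧ S = {p, p + eT n i + eT n i}}

/-- The number of flippable pairs of `M`. -/
def nflipT (n : ℕ) (M : Set (ET n)) : ℕ := (flipPairsT n M).ncard

/-- The plaquette sublattice determined by the parities `a, b` of the two coordinates
(well-defined for `n` even). -/
def onSubT (n : ℕ) (a b : ZMod 2) (p : VT n) : Prop :=
  ((p.1.val : ZMod 2) = a) ∧ ((p.2.val : ZMod 2) = b)

end HQDMT

namespace HQDMT

/-- `M` is one of the eight "VBS" configurations: for some plaquette sublattice (given by the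
parities `a, b`), every plaquette of the sublattice hosts a parallel pair, and the orientation
of these pairs alternates in checkerboard fashion over the sublattice. -/
def IsAltGridT (n : ℕ) (M : Set (ET n)) : Prop :=
  ∃ a b : ZMod 2,
    (∀ p : VT n, onSubT n a b p → HostsParT n M p) ∧
    (∀ p : VT n, onSubT n a b p →
      ((HostsHT n M p ↔ HostsVT n M (p + (2, 0))) ∧
       (HostsHT n M p ↔ HostsVT n M (p + (0, 2)))))

end HQDMT
namespace HQDMT

variable {n : ℕ}

lemma eT_zero : eT n 0 = (1, 0) := rfl
lemma eT_one : eT n 1 = (0, 1) := rfl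

lemma fin2_cases (i : Fin 2) : i = 0 ∨ i = 1 := by omega

lemma mem_ends_iff {w : VT n} {ed : ET n} :
    w ∈ endsT n ed ↔ w = ed.1 ∨ w = ed.1 + eT n ed.2 := by
  simp [endsT]

section PM
variable {M : Set (ET n)} (hM : IsPMT n M)
include hM

lemma pm_unique {ed ed' : ET n} (h1 : ed ∈ M) (h2 : ed' ∈ M) {w : VT n}
    (hw : w ∈ endsT n ed) (hw' : w ∈ endsT n ed') : ed = ed' := by
  obtain ⟨x, _, hu⟩ := hM w
  rw [hu ed ⟨h1, hw⟩, hu ed' ⟨h2, hw'⟩]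

lemma two_edges {u : VT n} (h0 : (u, (0 : Fin 2)) ∈ M) (h1 : (u, (1 : Fin 2)) ∈ M) : False := by
  have := pm_unique hM h0 h1 (w := u) (by simp [endsT]) (by simp [endsT])
  simp at this

lemma two_edges_h (hn : 1 < n) {u : VT n} (h0 : (u, (0 : Fin 2)) ∈ M)
    (h1 : (u + (1, 0), (0 : Fin 2)) ∈ M) : False := by
  haveI : NeZero n := ⟨by omega⟩
  haveI : Fact (1 < n) := ⟨hn⟩
  have := pm_unique hM h0 h1 (w := u + (1, 0)) (by simp [endsT, eT]) (by simp [endsT])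
  have h2 : u = u + ((1 : ZMod n), (0 : ZMod n)) := congrArg Prod.fst this
  have : ((1 : ZMod n), (0 : ZMod n)) = 0 := by
    have := h2.symm
    rwa [add_eq_left] at this
  rw [Prod.ext_iff] at this
  exact one_ne_zero this.1

lemma two_edges_v (hn : 1 < n) {u : VT n} (h0 : (u, (1 : Fin 2)) ∈ M)
    (h1 : (u + (0, 1), (1 : Fin 2)) ∈ M) : False := by
  haveI : NeZero n := ⟨by omega⟩
  haveI : Fact (1 < n) := ⟨hn⟩
  have := pm_unique hM h0 h1 (w := u + (0, 1)) (by simp [endsT, eT]) (by simp [endsT])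
  have h2 : u = u + ((0 : ZMod n), (1 : ZMod n)) := congrArg Prod.fst this
  have : ((0 : ZMod n), (1 : ZMod n)) = 0 := by
    have := h2.symm
    rwa [add_eq_left] at this
  rw [Prod.ext_iff] at this
  exact one_ne_zero this.2

-- conflict lemmas
lemma conf_HV {p : VT n} (h : HostsHT n M p) (h' : HostsVT n M p) : False :=
  two_edges hM h.1 h'.1

lemma conf_H_Vup {p : VT n} (h : HostsHT n M p) (h' : HostsVT n M (p + (0, 1))) : False :=
  two_edges hM h.2 h'.1

lemma conf_V_Hright {p : VT n} (h : HostsVT n M p) (h' : HostsHT n M (p + (1, 0))) : False :=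
  two_edges hM h'.1 h.2

lemma conf_HH_right (hn : 1 < n) {p : VT n} (h : HostsHT n M p)
    (h' : HostsHT n M (p + (1, 0))) : False :=
  two_edges_h hM hn h.1 h'.1

lemma conf_VV_up (hn : 1 < n) {p : VT n} (h : HostsVT n M p)
    (h' : HostsVT n M (p + (0, 1))) : False :=
  two_edges_v hM hn h.1 h'.1

end PM

lemma flip_par {M : Set (ET n)} {p : VT n} {i : Fin 2} (h : FlipPairT n M p i) :
    HostsParT n M p := by
  rcases h with h | h
  · exact Or.inl h.1
  · exact Or.inr h.1

/-- The edge of the parallel pair at `p` that sticks out toward direction `i`. -/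
def phiT (M : Set (ET n)) (p : VT n) (i : Fin 2) : ET n :=
  if HostsHT n M p then (if i = 0 then (p, 0) else (p + (0, 1), 0))
  else (if i = 0 then (p + (1, 0), 1) else (p, 1))

lemma phiT_mem {M : Set (ET n)} {p : VT n} (hp : HostsParT n M p) (i : Fin 2) :
    phiT M p i ∈ M := by
  unfold phiT
  by_cases hH : HostsHT n M p
  · rcases fin2_cases i with rfl | rfl <;> simp [hH, hH.1, hH.2]
  · have hV : HostsVT n M p := hp.resolve_left hH
    rcases fin2_cases i with rfl | rfl <;> simp [hH, hV.1, hV.2]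

end HQDMT
namespace HQDMT

variable {n : ℕ}

lemma two_e0 (p : VT n) : p + eT n 0 + eT n 0 = p + (2, 0) := by
  rw [eT_zero, add_assoc]
  congr 1
  rw [Prod.mk_add_mk]
  norm_num

lemma two_e1 (p : VT n) : p + eT n 1 + eT n 1 = p + (0, 2) := by
  rw [eT_one, add_assoc]
  congr 1
  rw [Prod.mk_add_mk]
  norm_num

lemma flip0 {M : Set (ET n)} {p : VT n} (h : FlipPairT n M p 0) :
    (HostsHT n M p ∧ HostsVT n M (p + (2, 0))) ∨
    (HostsVT n M p ∧ HostsHT n M (p + (2, 0))) := by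
  rwa [FlipPairT, two_e0] at h

lemma flip1 {M : Set (ET n)} {p : VT n} (h : FlipPairT n M p 1) :
    (HostsHT n M p ∧ HostsVT n M (p + (0, 2))) ∨
    (HostsVT n M p ∧ HostsHT n M (p + (0, 2))) := by
  rwa [FlipPairT, two_e1] at h

lemma phiT_H0 {M : Set (ET n)} {p : VT n} (hH : HostsHT n M p) : phiT M p 0 = (p, 0) := by
  unfold phiT; rw [if_pos hH]; simp

lemma phiT_H1 {M : Set (ET n)} {p : VT n} (hH : HostsHT n M p) :
    phiT M p 1 = (p + (0, 1), 0) := by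
  unfold phiT; rw [if_pos hH]; simp

lemma phiT_V0 {M : Set (ET n)} {p : VT n} (hH : ¬ HostsHT n M p) :
    phiT M p 0 = (p + (1, 0), 1) := by
  unfold phiT; rw [if_neg hH]; simp

lemma phiT_V1 {M : Set (ET n)} {p : VT n} (hH : ¬ HostsHT n M p) : phiT M p 1 = (p, 1) := by
  unfold phiT; rw [if_neg hH]; simp


section Inj
variable {M : Set (ET n)} (hM : IsPMT n M) (hn : 1 < n)
include hM hn

omit hn in
lemma phiT_inj {p q : VT n} {i j : Fin 2} (hp : FlipPairT n M p i) (hq : FlipPairT n M q j)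
    (h : phiT M p i = phiT M q j) : p = q ∧ i = j := by
  have hpar_p := flip_par hp
  have hpar_q := flip_par hq
  by_cases hHp : HostsHT n M p <;> by_cases hHq : HostsHT n M q <;>
    rcases fin2_cases i with rfl | rfl <;> rcases fin2_cases j with rfl | rfl
  · rw [phiT_H0 hHp, phiT_H0 hHq, Prod.mk.injEq] at h
    exact ⟨h.1, rfl⟩
  · -- H H, i = 0, j = 1 : p = q + (0,1)
    exfalso
    rw [phiT_H0 hHp, phiT_H1 hHq, Prod.mk.injEq] at h
    have hpq : p = q + (0, 1) := h.1
    rcases flip1 hq with ⟨_, hV⟩ | ⟨hVq, _⟩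
    · refine conf_H_Vup hM hHp ?_
      have he : q + (0, 2) = p + (0, 1) := by
        rw [hpq, add_assoc]; congr 1; rw [Prod.mk_add_mk]; norm_num
      rwa [he] at hV
    · exact conf_HV hM hHq hVq
  · -- H H, i = 1, j = 0
    exfalso
    rw [phiT_H1 hHp, phiT_H0 hHq, Prod.mk.injEq] at h
    have hpq : q = p + (0, 1) := h.1.symm
    rcases flip1 hp with ⟨_, hV⟩ | ⟨hVp, _⟩
    · refine conf_H_Vup hM hHq ?_
      have he : p + (0, 2) = q + (0, 1) := by
        rw [hpq, add_assoc]; congr 1; rw [Prod.mk_add_mk]; norm_num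
      rwa [he] at hV
    · exact conf_HV hM hHp hVp
  · rw [phiT_H1 hHp, phiT_H1 hHq, Prod.mk.injEq] at h
    exact ⟨by simpa using h.1, rfl⟩
  -- H vs V : direction components clash
  · rw [phiT_H0 hHp, phiT_V0 hHq, Prod.mk.injEq] at h; exact absurd h.2 (by decide)
  · rw [phiT_H0 hHp, phiT_V1 hHq, Prod.mk.injEq] at h; exact absurd h.2 (by decide)
  · rw [phiT_H1 hHp, phiT_V0 hHq, Prod.mk.injEq] at h; exact absurd h.2 (by decide)
  · rw [phiT_H1 hHp, phiT_V1 hHq, Prod.mk.injEq] at h; exact absurd h.2 (by decide)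
  · rw [phiT_V0 hHp, phiT_H0 hHq, Prod.mk.injEq] at h; exact absurd h.2 (by decide)
  · rw [phiT_V0 hHp, phiT_H1 hHq, Prod.mk.injEq] at h; exact absurd h.2 (by decide)
  · rw [phiT_V1 hHp, phiT_H0 hHq, Prod.mk.injEq] at h; exact absurd h.2 (by decide)
  · rw [phiT_V1 hHp, phiT_H1 hHq, Prod.mk.injEq] at h; exact absurd h.2 (by decide)
  -- both vertical
  · rw [phiT_V0 hHp, phiT_V0 hHq, Prod.mk.injEq] at h
    exact ⟨by simpa using h.1, rfl⟩
  · -- V V, i = 0, j = 1 : p + (1,0) = q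
    exfalso
    rw [phiT_V0 hHp, phiT_V1 hHq, Prod.mk.injEq] at h
    have hVq : HostsVT n M q := hpar_q.resolve_left hHq
    have hpq : q = p + (1, 0) := h.1.symm
    rcases flip0 hp with ⟨hHp', _⟩ | ⟨_, hH⟩
    · exact hHp hHp'
    · refine conf_V_Hright hM hVq ?_
      have he : p + (2, 0) = q + (1, 0) := by
        rw [hpq, add_assoc]; congr 1; rw [Prod.mk_add_mk]; norm_num
      rwa [he] at hH
  · -- V V, i = 1, j = 0
    exfalso
    rw [phiT_V1 hHp, phiT_V0 hHq, Prod.mk.injEq] at h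
    have hVp : HostsVT n M p := hpar_p.resolve_left hHp
    have hpq : p = q + (1, 0) := h.1
    rcases flip0 hq with ⟨hHq', _⟩ | ⟨_, hH⟩
    · exact hHq hHq'
    · refine conf_V_Hright hM hVp ?_
      have he : q + (2, 0) = p + (1, 0) := by
        rw [hpq, add_assoc]; congr 1; rw [Prod.mk_add_mk]; norm_num
      rwa [he] at hH
  · rw [phiT_V1 hHp, phiT_V1 hHq, Prod.mk.injEq] at h
    exact ⟨h.1, rfl⟩

end Inj

/-- The endpoint map: a flippable plaquette-with-direction, plus a choice of endpoint,
yields a vertex. -/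
def gT (M : Set (ET n)) (x : (VT n × Fin 2) × Fin 2) : VT n :=
  if x.2 = 0 then (phiT M x.1.1 x.1.2).1 else (phiT M x.1.1 x.1.2).1 + eT n (phiT M x.1.1 x.1.2).2

lemma gT_mem_ends (M : Set (ET n)) (x : (VT n × Fin 2) × Fin 2) :
    gT M x ∈ endsT n (phiT M x.1.1 x.1.2) := by
  unfold gT
  rcases fin2_cases x.2 with h | h <;> simp [h, endsT]

lemma ends_ne {n : ℕ} (hn : 1 < n) (ed : ET n) : ed.1 ≠ ed.1 + eT n ed.2 := by
  haveI : NeZero n := ⟨by omega⟩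
  haveI : Fact (1 < n) := ⟨hn⟩
  intro h
  have : eT n ed.2 = 0 := by
    have := h.symm
    rwa [add_eq_left] at this
  rcases fin2_cases ed.2 with h2 | h2 <;> rw [h2] at this <;>
    simp [eT, Prod.ext_iff] at this

lemma gT_injOn {M : Set (ET n)} (hM : IsPMT n M) (hn : 1 < n) :
    Set.InjOn (gT M) {x : (VT n × Fin 2) × Fin 2 | FlipPairT n M x.1.1 x.1.2} := by
  rintro ⟨⟨p, i⟩, k⟩ hx ⟨⟨q, j⟩, l⟩ hy hxy
  simp only [Set.mem_setOf_eq] at hx hy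
  have hmem : phiT M p i ∈ M := phiT_mem (flip_par hx) i
  have hmem' : phiT M q j ∈ M := phiT_mem (flip_par hy) j
  have h1 : gT M ((p, i), k) ∈ endsT n (phiT M p i) := gT_mem_ends M _
  have h2 : gT M ((p, i), k) ∈ endsT n (phiT M q j) := hxy ▸ gT_mem_ends M _
  have hphi : phiT M p i = phiT M q j := pm_unique hM hmem hmem' h1 h2
  obtain ⟨hpq, hij⟩ := phiT_inj hM hx hy hphi
  subst hpq; subst hij
  have hkl : k = l := by
    by_contra hkl
    have hne := ends_ne hn (phiT M p i)
    unfold gT at hxy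
    rcases fin2_cases k with rfl | rfl <;> rcases fin2_cases l with rfl | rfl <;>
      simp_all
  rw [hkl]

end HQDMT
namespace HQDMT

variable {n : ℕ}

def PhiS (n : ℕ) (M : Set (ET n)) : Set (VT n × Fin 2) := {x | FlipPairT n M x.1 x.2}

def TTS (n : ℕ) (M : Set (ET n)) : Set ((VT n × Fin 2) × Fin 2) := {x | FlipPairT n M x.1.1 x.1.2}

lemma cast2_ne_zero (h8 : 8 ≤ n) : ((2 : ℕ) : ZMod n) ≠ 0 := by
  intro h
  rw [ZMod.natCast_eq_zero_iff] at h
  have := Nat.le_of_dvd (by norm_num) h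
  omega

lemma cast4_ne_zero (h8 : 8 ≤ n) : ((4 : ℕ) : ZMod n) ≠ 0 := by
  intro h
  rw [ZMod.natCast_eq_zero_iff] at h
  have := Nat.le_of_dvd (by norm_num) h
  omega

lemma nflip_eq_ncard_PhiS (h8 : 8 ≤ n) (M : Set (ET n)) :
    nflipT n M = (PhiS n M).ncard := by
  have h2 : ((2 : ℕ) : ZMod n) ≠ 0 := cast2_ne_zero h8
  have h4 : ((4 : ℕ) : ZMod n) ≠ 0 := cast4_ne_zero h8
  have himg : flipPairsT n M =
      (fun x : VT n × Fin 2 => ({x.1, x.1 + eT n x.2 + eT n x.2} : Set (VT n))) '' PhiS n M := by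
    ext S
    constructor
    · rintro ⟨p, i, hpi, rfl⟩
      exact ⟨(p, i), hpi, rfl⟩
    · rintro ⟨⟨p, i⟩, hpi, rfl⟩
      exact ⟨p, i, hpi, rfl⟩
  rw [nflipT, himg]
  refine Set.ncard_image_of_injOn ?_
  rintro ⟨p, i⟩ _ ⟨q, j⟩ _ hS
  simp only at hS
  rcases fin2_cases i with rfl | rfl <;> rcases fin2_cases j with rfl | rfl
  · rw [two_e0 p, two_e0 q, Set.pair_eq_pair_iff] at hS
    rcases hS with ⟨h1, _⟩ | ⟨h1, h2'⟩
    · rw [h1]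
    · exfalso
      have hz : q + (((2:ZMod n),(0:ZMod n)) + (2,0)) = q := by
        rw [← add_assoc, ← h1]; exact h2'
      have := add_eq_left.mp hz
      rw [Prod.mk_add_mk, show (0 : VT n) = ((0,0) : VT n) from rfl, Prod.mk.injEq] at this
      exact h4 (by push_cast; linear_combination this.1)
  · exfalso
    rw [two_e0 p, two_e1 q, Set.pair_eq_pair_iff] at hS
    rcases hS with ⟨h1, h2'⟩ | ⟨h1, h2'⟩
    · rw [h1] at h2'
      have := add_left_cancel h2'
      rw [Prod.mk.injEq] at this
      exact h2 (by push_cast; exact this.1)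
    · have hz : q + (((0:ZMod n),(2:ZMod n)) + (2,0)) = q := by
        rw [← add_assoc, ← h1]; exact h2'
      have := add_eq_left.mp hz
      rw [Prod.mk_add_mk, show (0 : VT n) = ((0,0) : VT n) from rfl, Prod.mk.injEq] at this
      exact h2 (by push_cast; linear_combination this.1)
  · exfalso
    rw [two_e1 p, two_e0 q, Set.pair_eq_pair_iff] at hS
    rcases hS with ⟨h1, h2'⟩ | ⟨h1, h2'⟩
    · rw [h1] at h2'
      have := add_left_cancel h2'
      rw [Prod.mk.injEq] at this
      exact h2 (by push_cast; linear_combination this.2)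
    · have hz : q + (((2:ZMod n),(0:ZMod n)) + (0,2)) = q := by
        rw [← add_assoc, ← h1]; exact h2'
      have := add_eq_left.mp hz
      rw [Prod.mk_add_mk, show (0 : VT n) = ((0,0) : VT n) from rfl, Prod.mk.injEq] at this
      exact h2 (by push_cast; linear_combination this.1)
  · rw [two_e1 p, two_e1 q, Set.pair_eq_pair_iff] at hS
    rcases hS with ⟨h1, _⟩ | ⟨h1, h2'⟩
    · rw [h1]
    · exfalso
      have hz : q + (((0:ZMod n),(2:ZMod n)) + (0,2)) = q := by
        rw [← add_assoc, ← h1]; exact h2'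
      have := add_eq_left.mp hz
      rw [Prod.mk_add_mk, show (0 : VT n) = ((0,0) : VT n) from rfl, Prod.mk.injEq] at this
      exact h4 (by push_cast; linear_combination this.2)

lemma ncard_TTS (M : Set (ET n)) : (TTS n M).ncard = 2 * (PhiS n M).ncard := by
  have hprod : TTS n M = (PhiS n M) ×ˢ (Set.univ : Set (Fin 2)) := by
    ext ⟨x, k⟩
    simp [TTS, PhiS, Set.mem_prod]
  rw [hprod, ← Nat.card_coe_set_eq, Nat.card_congr (Equiv.Set.prod _ _), Nat.card_prod,
    Nat.card_coe_set_eq, Nat.card_coe_set_eq, Set.ncard_univ, Nat.card_eq_fintype_card,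
    Fintype.card_fin, mul_comm]

lemma ncard_univ_VT (h8 : 8 ≤ n) : (Set.univ : Set (VT n)).ncard = n ^ 2 := by
  rw [Set.ncard_univ, Nat.card_prod, Nat.card_zmod, sq]

lemma nflip_le (h8 : 8 ≤ n) {M : Set (ET n)} (hM : IsPMT n M) :
    nflipT n M ≤ n ^ 2 / 2 := by
  have hn1 : 1 < n := by omega
  haveI : NeZero n := ⟨by omega⟩
  have hle : (TTS n M).ncard ≤ (Set.univ : Set (VT n)).ncard := by
    refine Set.ncard_le_ncard_of_injOn (gT M) (fun a _ => trivial) ?_ (Set.toFinite _)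
    exact gT_injOn hM hn1
  rw [ncard_TTS, ncard_univ_VT h8] at hle
  rw [nflip_eq_ncard_PhiS h8]
  omega

/-- surjectivity onto vertices in the equality case -/
lemma surj_of_eq (h8 : 8 ≤ n) (h2n : 2 ∣ n) {M : Set (ET n)} (hM : IsPMT n M)
    (heq : nflipT n M = n ^ 2 / 2) :
    ∀ v : VT n, ∃ p i, FlipPairT n M p i ∧ v ∈ endsT n (phiT M p i) := by
  have hn1 : 1 < n := by omega
  haveI : NeZero n := ⟨by omega⟩
  have hsq : n ^ 2 = 2 * (n ^ 2 / 2) := by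
    obtain ⟨m, rfl⟩ := h2n
    ring_nf
    omega
  have hT : (TTS n M).ncard = (Set.univ : Set (VT n)).ncard := by
    rw [ncard_TTS, ncard_univ_VT h8, ← nflip_eq_ncard_PhiS h8, heq]
    omega
  have himg : gT M '' TTS n M = Set.univ := by
    refine Set.eq_of_subset_of_ncard_le (Set.subset_univ _) ?_ (Set.toFinite _)
    rw [Set.ncard_image_of_injOn (show Set.InjOn (gT M) (TTS n M) from gT_injOn hM hn1), hT]
  intro v
  have hv : v ∈ gT M '' TTS n M := himg ▸ Set.mem_univ v
  obtain ⟨⟨⟨p, i⟩, k⟩, hx, hgx⟩ := hv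
  exact ⟨p, i, hx, hgx ▸ gT_mem_ends M _⟩

end HQDMT
namespace HQDMT

variable {n : ℕ}

section Struct
variable {M : Set (ET n)} (hM : IsPMT n M)
  (hS : ∀ v : VT n, ∃ p i, FlipPairT n M p i ∧ v ∈ endsT n (phiT M p i))
include hM hS

lemma E_H1 {p : VT n} (h : HostsHT n M p) : HostsVT n M (p + (2, 0)) := by
  obtain ⟨q, i, hf, hv⟩ := hS p
  have hq : phiT M q i = (p, 0) :=
    pm_unique hM (phiT_mem (flip_par hf) i) h.1 hv (by simp [endsT])
  by_cases hHq : HostsHT n M q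
  · rcases fin2_cases i with rfl | rfl
    · rw [phiT_H0 hHq, Prod.mk.injEq] at hq
      rcases flip0 hf with ⟨_, hV⟩ | ⟨hVq, _⟩
      · rwa [hq.1] at hV
      · exact absurd hVq (fun hVq => conf_HV hM hHq hVq)
    · rw [phiT_H1 hHq, Prod.mk.injEq] at hq
      exfalso
      rcases flip1 hf with ⟨_, hV⟩ | ⟨hVq, _⟩
      · refine conf_H_Vup hM h ?_
        have he : q + (0, 2) = p + (0, 1) := by
          rw [← hq.1, add_assoc]
          congr 1
          rw [Prod.mk_add_mk]
          norm_num
        rwa [he] at hV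
      · exact conf_HV hM hHq hVq
  · exfalso
    rcases fin2_cases i with rfl | rfl
    · rw [phiT_V0 hHq, Prod.mk.injEq] at hq
      exact absurd hq.2 (by decide)
    · rw [phiT_V1 hHq, Prod.mk.injEq] at hq
      exact absurd hq.2 (by decide)

lemma S_HH (hn : 1 < n) {p : VT n} (h : HostsHT n M p) (h' : HostsHT n M (p + (0, 1))) :
    False := by
  have h1 := E_H1 hM hS h
  have h2 := E_H1 hM hS h'
  rw [add_right_comm] at h2
  exact conf_VV_up hM hn h1 h2

lemma E_H2 (hn : 1 < n) {p : VT n} (h : HostsHT n M p) : HostsVT n M (p + (0, 2)) := by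
  obtain ⟨q, i, hf, hv⟩ := hS (p + (0, 1))
  have hq : phiT M q i = (p + (0, 1), 0) :=
    pm_unique hM (phiT_mem (flip_par hf) i) h.2 hv (by simp [endsT])
  by_cases hHq : HostsHT n M q
  · rcases fin2_cases i with rfl | rfl
    · rw [phiT_H0 hHq, Prod.mk.injEq] at hq
      exact absurd h (fun h => S_HH hM hS hn h (hq.1 ▸ hHq))
    · rw [phiT_H1 hHq, Prod.mk.injEq] at hq
      have hqp : q = p := add_right_cancel hq.1
      subst hqp
      rcases flip1 hf with ⟨_, hV⟩ | ⟨hVq, _⟩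
      · exact hV
      · exact absurd hVq (fun hVq => conf_HV hM hHq hVq)
  · exfalso
    rcases fin2_cases i with rfl | rfl
    · rw [phiT_V0 hHq, Prod.mk.injEq] at hq
      exact absurd hq.2 (by decide)
    · rw [phiT_V1 hHq, Prod.mk.injEq] at hq
      exact absurd hq.2 (by decide)

lemma E_V1 {p : VT n} (h : HostsVT n M p) : HostsHT n M (p + (0, 2)) := by
  obtain ⟨q, i, hf, hv⟩ := hS p
  have hq : phiT M q i = (p, 1) :=
    pm_unique hM (phiT_mem (flip_par hf) i) h.1 hv (by simp [endsT])
  by_cases hHq : HostsHT n M q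
  · exfalso
    rcases fin2_cases i with rfl | rfl
    · rw [phiT_H0 hHq, Prod.mk.injEq] at hq
      exact absurd hq.2 (by decide)
    · rw [phiT_H1 hHq, Prod.mk.injEq] at hq
      exact absurd hq.2 (by decide)
  · have hVq : HostsVT n M q := (flip_par hf).resolve_left hHq
    rcases fin2_cases i with rfl | rfl
    · rw [phiT_V0 hHq, Prod.mk.injEq] at hq
      exfalso
      rcases flip0 hf with ⟨hH, _⟩ | ⟨_, hH⟩
      · exact hHq hH
      · refine conf_V_Hright hM h ?_
        have he : q + (2, 0) = p + (1, 0) := by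
          rw [← hq.1, add_assoc]
          congr 1
          rw [Prod.mk_add_mk]
          norm_num
        rwa [he] at hH
    · rw [phiT_V1 hHq, Prod.mk.injEq] at hq
      rcases flip1 hf with ⟨hH, _⟩ | ⟨_, hH⟩
      · exact absurd hH hHq
      · rwa [hq.1] at hH

lemma S_VV (hn : 1 < n) {p : VT n} (h : HostsVT n M p) (h' : HostsVT n M (p + (1, 0))) :
    False := by
  have h1 := E_V1 hM hS h
  have h2 := E_V1 hM hS h'
  rw [add_right_comm] at h2
  exact conf_HH_right hM hn h1 h2

lemma E_V2 (hn : 1 < n) {p : VT n} (h : HostsVT n M p) : HostsHT n M (p + (2, 0)) := by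
  obtain ⟨q, i, hf, hv⟩ := hS (p + (1, 0))
  have hq : phiT M q i = (p + (1, 0), 1) :=
    pm_unique hM (phiT_mem (flip_par hf) i) h.2 hv (by simp [endsT])
  by_cases hHq : HostsHT n M q
  · exfalso
    rcases fin2_cases i with rfl | rfl
    · rw [phiT_H0 hHq, Prod.mk.injEq] at hq
      exact absurd hq.2 (by decide)
    · rw [phiT_H1 hHq, Prod.mk.injEq] at hq
      exact absurd hq.2 (by decide)
  · have hVq : HostsVT n M q := (flip_par hf).resolve_left hHq
    rcases fin2_cases i with rfl | rfl
    · rw [phiT_V0 hHq, Prod.mk.injEq] at hq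
      have hqp : q = p := add_right_cancel hq.1
      subst hqp
      rcases flip0 hf with ⟨hH, _⟩ | ⟨_, hH⟩
      · exact absurd hH hHq
      · exact hH
    · rw [phiT_V1 hHq, Prod.mk.injEq] at hq
      exact absurd h (fun h => S_VV hM hS hn h (hq.1 ▸ hVq))

lemma par_step_e1 (hn : 1 < n) {p : VT n} (h : HostsParT n M p) :
    HostsParT n M (p + (2, 0)) := by
  rcases h with h | h
  · exact Or.inr (E_H1 hM hS h)
  · exact Or.inl (E_V2 hM hS hn h)

lemma par_step_e2 (hn : 1 < n) {p : VT n} (h : HostsParT n M p) :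
    HostsParT n M (p + (0, 2)) := by
  rcases h with h | h
  · exact Or.inr (E_H2 hM hS hn h)
  · exact Or.inl (E_V1 hM hS h)

lemma alt_iffs (hn : 1 < n) {p : VT n} (h : HostsParT n M p) :
    (HostsHT n M p ↔ HostsVT n M (p + (2, 0))) ∧
    (HostsHT n M p ↔ HostsVT n M (p + (0, 2))) := by
  constructor
  · constructor
    · exact E_H1 hM hS
    · intro hV
      by_contra hH
      have hVp : HostsVT n M p := h.resolve_left hH
      exact conf_HV hM (E_V2 hM hS hn hVp) hV
  · constructor
    · exact E_H2 hM hS hn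
    · intro hV
      by_contra hH
      have hVp : HostsVT n M p := h.resolve_left hH
      exact conf_HV hM (E_V1 hM hS hVp) hV

end Struct

lemma exists_two_mul (h2n : 2 ∣ n) [NeZero n] {x : ZMod n} (hx : ((x.val : ℕ) : ZMod 2) = 0) :
    ∃ k : ℕ, x = ((2 * k : ℕ) : ZMod n) := by
  rw [ZMod.natCast_eq_zero_iff] at hx
  refine ⟨x.val / 2, ?_⟩
  rw [Nat.mul_div_cancel' hx, ZMod.natCast_zmod_val]

lemma parity_hom (h2n : 2 ∣ n) [NeZero n] (x : ZMod n) :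
    ((x.val : ℕ) : ZMod 2) = ZMod.castHom h2n (ZMod 2) x := by
  rw [ZMod.castHom_apply, ZMod.natCast_val]

lemma reach (h8 : 8 ≤ n) (h2n : 2 ∣ n) {P : VT n → Prop}
    (h1 : ∀ p, P p → P (p + (2, 0))) (h2 : ∀ p, P p → P (p + (0, 2)))
    {p q : VT n} (hp : P p)
    (hq1 : ((q.1.val : ℕ) : ZMod 2) = ((p.1.val : ℕ) : ZMod 2))
    (hq2 : ((q.2.val : ℕ) : ZMod 2) = ((p.2.val : ℕ) : ZMod 2)) : P q := by
  haveI : NeZero n := ⟨by omega⟩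
  have key : ∀ k l : ℕ, P (p + (((2 * k : ℕ) : ZMod n), ((2 * l : ℕ) : ZMod n))) := by
    intro k
    induction k with
    | zero =>
      intro l
      induction l with
      | zero => simpa [Prod.mk_zero_zero] using hp
      | succ l ih =>
        have hc : ((2 * (l + 1) : ℕ) : ZMod n) = ((2 * l : ℕ) : ZMod n) + 2 := by
          push_cast; ring
        have he : p + (((2 * 0 : ℕ) : ZMod n), ((2 * (l+1) : ℕ) : ZMod n)) =
            p + (((2 * 0 : ℕ) : ZMod n), ((2 * l : ℕ) : ZMod n)) + (0, 2) := by
          rw [add_assoc]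
          congr 1
          rw [Prod.mk_add_mk, Prod.mk.injEq]
          exact ⟨(add_zero _).symm, hc⟩
        rw [he]
        exact h2 _ ih
    | succ k ih =>
      intro l
      have hc : ((2 * (k + 1) : ℕ) : ZMod n) = ((2 * k : ℕ) : ZMod n) + 2 := by
        push_cast; ring
      have he : p + (((2 * (k+1) : ℕ) : ZMod n), ((2 * l : ℕ) : ZMod n)) =
          p + (((2 * k : ℕ) : ZMod n), ((2 * l : ℕ) : ZMod n)) + (2, 0) := by
        rw [add_assoc]
        congr 1
        rw [Prod.mk_add_mk, Prod.mk.injEq]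
        exact ⟨hc, (add_zero _).symm⟩
      rw [he]
      exact h1 _ (ih l)
  have hx1 : ((((q.1 - p.1).val : ℕ)) : ZMod 2) = 0 := by
    rw [parity_hom h2n, map_sub, ← parity_hom h2n, ← parity_hom h2n, hq1, sub_self]
  have hx2 : ((((q.2 - p.2).val : ℕ)) : ZMod 2) = 0 := by
    rw [parity_hom h2n, map_sub, ← parity_hom h2n, ← parity_hom h2n, hq2, sub_self]
  obtain ⟨k, hk⟩ := exists_two_mul h2n hx1
  obtain ⟨l, hl⟩ := exists_two_mul h2n hx2
  have hq : q = p + (((2 * k : ℕ) : ZMod n), ((2 * l : ℕ) : ZMod n)) := by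
    rw [Prod.ext_iff]
    constructor
    · simp only [Prod.fst_add]
      rw [sub_eq_iff_eq_add.mp hk, add_comm]
    · simp only [Prod.snd_add]
      rw [sub_eq_iff_eq_add.mp hl, add_comm]
  rw [hq]
  exact key k l

lemma altgrid_of_surj (h8 : 8 ≤ n) (h2n : 2 ∣ n) {M : Set (ET n)} (hM : IsPMT n M)
    (hS : ∀ v : VT n, ∃ p i, FlipPairT n M p i ∧ v ∈ endsT n (phiT M p i)) :
    IsAltGridT n M := by
  have hn1 : 1 < n := by omega
  obtain ⟨q0, i0, hf0, _⟩ := hS 0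
  have hpar0 : HostsParT n M q0 := flip_par hf0
  refine ⟨((q0.1.val : ℕ) : ZMod 2), ((q0.2.val : ℕ) : ZMod 2), ?_, ?_⟩
  · intro p hp
    exact reach h8 h2n (fun r hr => par_step_e1 hM hS hn1 hr)
      (fun r hr => par_step_e2 hM hS hn1 hr) hpar0 hp.1 hp.2
  · intro p hp
    have hparp : HostsParT n M p := by
      exact reach h8 h2n (fun r hr => par_step_e1 hM hS hn1 hr)
        (fun r hr => par_step_e2 hM hS hn1 hr) hpar0 hp.1 hp.2
    exact alt_iffs hM hS hn1 hparp

lemma altgrid_of_max (h8 : 8 ≤ n) (h2n : 2 ∣ n) {M : Set (ET n)} (hM : IsPMT n M)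
    (heq : nflipT n M = n ^ 2 / 2) : IsAltGridT n M :=
  altgrid_of_surj h8 h2n hM (surj_of_eq h8 h2n hM heq)

end HQDMT
namespace HQDMT

variable {n : ℕ}

lemma par_iff [NeZero n] (x : ZMod n) (r : ZMod 2) :
    ((x.val : ℕ) : ZMod 2) = r ↔ x.val % 2 = r.val := by
  rw [← ZMod.natCast_mod x.val 2]
  constructor
  · intro h
    have h2 := congrArg ZMod.val h
    rw [ZMod.val_natCast] at h2
    omega
  · intro h
    rw [h, ZMod.natCast_zmod_val]

/-- the parity fiber in `ZMod n` has `n/2` elements -/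
lemma ncard_fiber (h8 : 8 ≤ n) (h2n : 2 ∣ n) (r : ZMod 2) :
    {x : ZMod n | ((x.val : ℕ) : ZMod 2) = r}.ncard = n / 2 := by
  haveI : NeZero n := ⟨by omega⟩
  have hr2 : r.val < 2 := ZMod.val_lt r
  have e : {x : ZMod n | ((x.val : ℕ) : ZMod 2) = r} ≃ Fin (n / 2) :=
    { toFun := fun x => ⟨x.1.val / 2, by
        have := ZMod.val_lt x.1
        omega⟩
      invFun := fun k => ⟨((2 * k.1 + r.val : ℕ) : ZMod n), by
        have hk := k.2
        have hlt : 2 * k.1 + r.val < n := by omega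
        have hv : (((2 * k.1 + r.val : ℕ) : ZMod n)).val = 2 * k.1 + r.val :=
          ZMod.val_cast_of_lt hlt
        rw [Set.mem_setOf_eq, par_iff, hv]
        omega⟩
      left_inv := fun x => by
        have hx : x.1.val % 2 = r.val := (par_iff x.1 r).mp x.2
        apply Subtype.ext
        have : 2 * (x.1.val / 2) + r.val = x.1.val := by omega
        simp only [this, ZMod.natCast_zmod_val]
      right_inv := fun k => by
        have hk := k.2
        have hlt : 2 * k.1 + r.val < n := by omega
        apply Fin.ext
        simp only [ZMod.val_cast_of_lt hlt]
        omega }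
  rw [← Nat.card_coe_set_eq, Nat.card_congr e, Nat.card_eq_fintype_card, Fintype.card_fin]

lemma ncard_sub (h8 : 8 ≤ n) (h2n : 2 ∣ n) (a b : ZMod 2) :
    {p : VT n | onSubT n a b p}.ncard = (n / 2) * (n / 2) := by
  haveI : NeZero n := ⟨by omega⟩
  have hprod : {p : VT n | onSubT n a b p} =
      {x : ZMod n | ((x.val : ℕ) : ZMod 2) = a} ×ˢ {x : ZMod n | ((x.val : ℕ) : ZMod 2) = b} := by
    ext p
    simp [onSubT, Set.mem_prod]
  rw [hprod, ← Nat.card_coe_set_eq, Nat.card_congr (Equiv.Set.prod _ _), Nat.card_prod,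
    Nat.card_coe_set_eq, Nat.card_coe_set_eq, ncard_fiber h8 h2n a, ncard_fiber h8 h2n b]

lemma flip0' {M : Set (ET n)} {p : VT n}
    (h : (HostsHT n M p ∧ HostsVT n M (p + (2, 0))) ∨
      (HostsVT n M p ∧ HostsHT n M (p + (2, 0)))) : FlipPairT n M p 0 := by
  rw [FlipPairT, two_e0]; exact h

lemma flip1' {M : Set (ET n)} {p : VT n}
    (h : (HostsHT n M p ∧ HostsVT n M (p + (0, 2))) ∨
      (HostsVT n M p ∧ HostsHT n M (p + (0, 2)))) : FlipPairT n M p 1 := by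
  rw [FlipPairT, two_e1]; exact h

lemma onSub_step1 (h8 : 8 ≤ n) (h2n : 2 ∣ n) {a b : ZMod 2} {p : VT n}
    (h : onSubT n a b p) : onSubT n a b (p + (2, 0)) := by
  haveI : NeZero n := ⟨by omega⟩
  refine ⟨?_, ?_⟩
  · show (((p + ((2 : ZMod n), (0 : ZMod n))).1.val : ℕ) : ZMod 2) = a
    rw [parity_hom h2n, Prod.fst_add, map_add, ← parity_hom h2n, h.1]
    have : (ZMod.castHom h2n (ZMod 2)) (2 : ZMod n) = 0 := by
      rw [map_ofNat]
      decide
    rw [this, add_zero]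
  · show (((p + ((2 : ZMod n), (0 : ZMod n))).2.val : ℕ) : ZMod 2) = b
    rw [Prod.snd_add]
    rw [parity_hom h2n, map_add, ← parity_hom h2n, h.2]
    have : (ZMod.castHom h2n (ZMod 2)) (0 : ZMod n) = 0 := map_zero _
    rw [this, add_zero]

lemma onSub_step2 (h8 : 8 ≤ n) (h2n : 2 ∣ n) {a b : ZMod 2} {p : VT n}
    (h : onSubT n a b p) : onSubT n a b (p + (0, 2)) := by
  haveI : NeZero n := ⟨by omega⟩
  refine ⟨?_, ?_⟩
  · show (((p + ((0 : ZMod n), (2 : ZMod n))).1.val : ℕ) : ZMod 2) = a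
    rw [Prod.fst_add, parity_hom h2n, map_add, ← parity_hom h2n, h.1, map_zero, add_zero]
  · show (((p + ((0 : ZMod n), (2 : ZMod n))).2.val : ℕ) : ZMod 2) = b
    rw [Prod.snd_add, parity_hom h2n, map_add, ← parity_hom h2n, h.2]
    have : (ZMod.castHom h2n (ZMod 2)) (2 : ZMod n) = 0 := by
      rw [map_ofNat]
      decide
    rw [this, add_zero]

lemma flips_of_altgrid (h8 : 8 ≤ n) (h2n : 2 ∣ n) {M : Set (ET n)} (hM : IsPMT n M)
    {a b : ZMod 2} (hpar : ∀ p : VT n, onSubT n a b p → HostsParT n M p)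
    (halt : ∀ p : VT n, onSubT n a b p →
      ((HostsHT n M p ↔ HostsVT n M (p + (2, 0))) ∧
       (HostsHT n M p ↔ HostsVT n M (p + (0, 2))))) :
    ∀ p : VT n, onSubT n a b p → FlipPairT n M p 0 ∧ FlipPairT n M p 1 := by
  intro p hp
  have hparp := hpar p hp
  have hpar1 := hpar _ (onSub_step1 h8 h2n hp)
  have hpar2 := hpar _ (onSub_step2 h8 h2n hp)
  constructor
  · refine flip0' ?_
    rcases hparp with hH | hV
    · exact Or.inl ⟨hH, ((halt p hp).1).mp hH⟩
    · refine Or.inr ⟨hV, ?_⟩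
      rcases hpar1 with hH1 | hV1
      · exact hH1
      · exact absurd (((halt p hp).1).mpr hV1) (fun hH => conf_HV hM hH hV)
  · refine flip1' ?_
    rcases hparp with hH | hV
    · exact Or.inl ⟨hH, ((halt p hp).2).mp hH⟩
    · refine Or.inr ⟨hV, ?_⟩
      rcases hpar2 with hH2 | hV2
      · exact hH2
      · exact absurd (((halt p hp).2).mpr hV2) (fun hH => conf_HV hM hH hV)

lemma nflip_eq_of_altgrid (h8 : 8 ≤ n) (h2n : 2 ∣ n) {M : Set (ET n)} (hM : IsPMT n M)
    (hA : IsAltGridT n M) : nflipT n M = n ^ 2 / 2 := by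
  haveI : NeZero n := ⟨by omega⟩
  refine le_antisymm (nflip_le h8 hM) ?_
  obtain ⟨a, b, hpar, halt⟩ := hA
  have hflip := flips_of_altgrid h8 h2n hM hpar halt
  have hsubset : ({p : VT n | onSubT n a b p} ×ˢ (Set.univ : Set (Fin 2))) ⊆ PhiS n M := by
    rintro ⟨p, i⟩ ⟨hp, -⟩
    rcases fin2_cases i with rfl | rfl
    · exact (hflip p hp).1
    · exact (hflip p hp).2
  have hle := Set.ncard_le_ncard hsubset (Set.toFinite _)
  have hcard : ({p : VT n | onSubT n a b p} ×ˢ (Set.univ : Set (Fin 2))).ncard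
      = 2 * ((n / 2) * (n / 2)) := by
    rw [← Nat.card_coe_set_eq, Nat.card_congr (Equiv.Set.prod _ _), Nat.card_prod,
      Nat.card_coe_set_eq, Nat.card_coe_set_eq, ncard_sub h8 h2n a b, Set.ncard_univ,
      Nat.card_eq_fintype_card, Fintype.card_fin, mul_comm]
  rw [hcard] at hle
  rw [nflip_eq_ncard_PhiS h8]
  obtain ⟨m, rfl⟩ := h2n
  have h1 : 2 * m / 2 = m := by omega
  have h2 : (2 * m) ^ 2 / 2 = 2 * (m * m) := by
    have : (2 * m) ^ 2 = 2 * (2 * (m * m)) := by ring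
    rw [this]
    omega
  rw [h1] at hle
  rw [h2]
  exact hle

end HQDMT
namespace HQDMT

variable {n : ℕ}

/-- "half-parity" on `ZMod 4`. -/
abbrev fQ (x : ZMod 4) : ZMod 2 := if x.val < 2 then 0 else 1

/-- parity on `ZMod 4`. -/
abbrev f2Q (x : ZMod 4) : ZMod 2 := ((x.val : ℕ) : ZMod 2)

/-- plaquette data: parity-(a,b) and checkerboard value c. -/
abbrev HVatQ (a b c : ZMod 2) (x y : ZMod 4) : Prop :=
  f2Q x = a ∧ f2Q y = b ∧ fQ x + fQ y = c

/-- reduction mod 4 -/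
abbrev qc (h4n : 4 ∣ n) (x : ZMod n) : ZMod 4 := ZMod.castHom h4n (ZMod 4) x

/-- The eight alternating-grid configurations. -/
def MdefT (h4n : 4 ∣ n) (a b c : ZMod 2) : Set (ET n) :=
  {ed | (ed.2 = 0 ∧ (HVatQ a b c (qc h4n ed.1.1) (qc h4n ed.1.2) ∨
                     HVatQ a b c (qc h4n ed.1.1) (qc h4n ed.1.2 - 1))) ∨
        (ed.2 = 1 ∧ (HVatQ a b (c+1) (qc h4n ed.1.1) (qc h4n ed.1.2) ∨
                     HVatQ a b (c+1) (qc h4n ed.1.1 - 1) (qc h4n ed.1.2)))}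

attribute [-instance] Classical.propDecidable in
lemma keyH : ∀ a b c : ZMod 2, ∀ x y : ZMod 4,
    (((HVatQ a b c x y ∨ HVatQ a b c x (y - 1)) ∧
      (HVatQ a b c x (y + 1) ∨ HVatQ a b c x (y + 1 - 1))) ↔ HVatQ a b c x y) := by decide

attribute [-instance] Classical.propDecidable in
lemma keyV : ∀ d a b : ZMod 2, ∀ x y : ZMod 4,
    (((HVatQ a b d x y ∨ HVatQ a b d (x - 1) y) ∧
      (HVatQ a b d (x + 1) y ∨ HVatQ a b d (x + 1 - 1) y)) ↔ HVatQ a b d x y) := by decide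

attribute [-instance] Classical.propDecidable in
set_option synthInstance.maxSize 2000 in
set_option synthInstance.maxHeartbeats 1000000 in
set_option maxHeartbeats 1000000 in
lemma keyPM : ∀ a b c : ZMod 2, ∀ x y : ZMod 4,
      (((HVatQ a b c x y ∨ HVatQ a b c x (y - 1)) ∧
        ¬(HVatQ a b c (x - 1) y ∨ HVatQ a b c (x - 1) (y - 1)) ∧
        ¬(HVatQ a b (c+1) x y ∨ HVatQ a b (c+1) (x - 1) y) ∧
        ¬(HVatQ a b (c+1) x (y - 1) ∨ HVatQ a b (c+1) (x - 1) (y - 1))) ∨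
       (¬(HVatQ a b c x y ∨ HVatQ a b c x (y - 1)) ∧
        (HVatQ a b c (x - 1) y ∨ HVatQ a b c (x - 1) (y - 1)) ∧
        ¬(HVatQ a b (c+1) x y ∨ HVatQ a b (c+1) (x - 1) y) ∧
        ¬(HVatQ a b (c+1) x (y - 1) ∨ HVatQ a b (c+1) (x - 1) (y - 1))) ∨
       (¬(HVatQ a b c x y ∨ HVatQ a b c x (y - 1)) ∧
        ¬(HVatQ a b c (x - 1) y ∨ HVatQ a b c (x - 1) (y - 1)) ∧
        (HVatQ a b (c+1) x y ∨ HVatQ a b (c+1) (x - 1) y) ∧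
        ¬(HVatQ a b (c+1) x (y - 1) ∨ HVatQ a b (c+1) (x - 1) (y - 1))) ∨
       (¬(HVatQ a b c x y ∨ HVatQ a b c x (y - 1)) ∧
        ¬(HVatQ a b c (x - 1) y ∨ HVatQ a b c (x - 1) (y - 1)) ∧
        ¬(HVatQ a b (c+1) x y ∨ HVatQ a b (c+1) (x - 1) y) ∧
        (HVatQ a b (c+1) x (y - 1) ∨ HVatQ a b (c+1) (x - 1) (y - 1)))) := by decide

section Mdef
variable (h4n : 4 ∣ n) (a b c : ZMod 2)

lemma mem_Mdef0 (u : VT n) : ((u, (0 : Fin 2)) ∈ MdefT h4n a b c) ↔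
    (HVatQ a b c (qc h4n u.1) (qc h4n u.2) ∨ HVatQ a b c (qc h4n u.1) (qc h4n u.2 - 1)) := by
  simp [MdefT]

lemma mem_Mdef1 (u : VT n) : ((u, (1 : Fin 2)) ∈ MdefT h4n a b c) ↔
    (HVatQ a b (c+1) (qc h4n u.1) (qc h4n u.2) ∨
     HVatQ a b (c+1) (qc h4n u.1 - 1) (qc h4n u.2)) := by
  simp [MdefT]

lemma qc_addright (x : ZMod n) (k : ℕ) : qc h4n (x + (k : ℕ)) = qc h4n x + (k : ℕ) := by
  show ZMod.castHom h4n (ZMod 4) _ = _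
  rw [map_add, map_natCast]

lemma qc_one (x : ZMod n) : qc h4n (x + 1) = qc h4n x + 1 := by
  show ZMod.castHom h4n (ZMod 4) _ = _
  rw [map_add, map_one]

lemma qc_sub_one (x : ZMod n) : qc h4n (x - 1) = qc h4n x - 1 := by
  show ZMod.castHom h4n (ZMod 4) _ = _
  rw [map_sub, map_one]

lemma hostsH_Mdef (p : VT n) : HostsHT n (MdefT h4n a b c) p ↔
    HVatQ a b c (qc h4n p.1) (qc h4n p.2) := by
  have key := keyH
  rw [HostsHT, mem_Mdef0, mem_Mdef0]
  have h1 : (p + ((0 : ZMod n), (1 : ZMod n))).1 = p.1 := by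
    rw [Prod.fst_add, add_zero]
  have h2 : (p + ((0 : ZMod n), (1 : ZMod n))).2 = p.2 + 1 := by
    rw [Prod.snd_add]
  rw [h1, h2, qc_one]
  exact key a b c _ _

lemma hostsV_Mdef (p : VT n) : HostsVT n (MdefT h4n a b c) p ↔
    HVatQ a b (c+1) (qc h4n p.1) (qc h4n p.2) := by
  have key := keyV
  rw [HostsVT, mem_Mdef1, mem_Mdef1]
  have h1 : (p + ((1 : ZMod n), (0 : ZMod n))).1 = p.1 + 1 := by
    rw [Prod.fst_add]
  have h2 : (p + ((1 : ZMod n), (0 : ZMod n))).2 = p.2 := by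
    rw [Prod.snd_add, add_zero]
  rw [h1, h2, qc_one]
  exact key (c+1) a b _ _

lemma edge_cases {w : VT n} {ed : ET n} (hw : w ∈ endsT n ed) :
    ed = (w, (0 : Fin 2)) ∨ ed = (w - (1, 0), (0 : Fin 2)) ∨
    ed = (w, (1 : Fin 2)) ∨ ed = (w - (0, 1), (1 : Fin 2)) := by
  rw [mem_ends_iff] at hw
  obtain ⟨u, i⟩ := ed
  rcases fin2_cases i with rfl | rfl <;> rcases hw with hw | hw
  · exact Or.inl (by rw [hw])
  · refine Or.inr (Or.inl ?_)
    simp only [eT_zero] at hw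
    rw [Prod.mk.injEq]
    exact ⟨eq_sub_of_add_eq hw.symm, rfl⟩
  · exact Or.inr (Or.inr (Or.inl (by rw [hw])))
  · refine Or.inr (Or.inr (Or.inr ?_))
    simp only [eT_one] at hw
    rw [Prod.mk.injEq]
    exact ⟨eq_sub_of_add_eq hw.symm, rfl⟩

lemma Mdef_isPM : IsPMT n (MdefT h4n a b c) := by
  intro w
  set x := qc h4n w.1 with hx
  set y := qc h4n w.2 with hy
  -- membership of the four candidate edges
  have hsub1 : (w - ((1 : ZMod n), (0 : ZMod n))).1 = w.1 - 1 := by rw [Prod.fst_sub]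
  have hsub1' : (w - ((1 : ZMod n), (0 : ZMod n))).2 = w.2 := by rw [Prod.snd_sub, sub_zero]
  have hsub2 : (w - ((0 : ZMod n), (1 : ZMod n))).1 = w.1 := by rw [Prod.fst_sub, sub_zero]
  have hsub2' : (w - ((0 : ZMod n), (1 : ZMod n))).2 = w.2 - 1 := by rw [Prod.snd_sub]
  have m0 : ((w, (0 : Fin 2)) ∈ MdefT h4n a b c) ↔
      (HVatQ a b c x y ∨ HVatQ a b c x (y - 1)) := mem_Mdef0 h4n a b c w
  have m1 : ((w - (1, 0), (0 : Fin 2)) ∈ MdefT h4n a b c) ↔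
      (HVatQ a b c (x - 1) y ∨ HVatQ a b c (x - 1) (y - 1)) := by
    rw [mem_Mdef0, hsub1, hsub1', qc_sub_one, ← hx, ← hy]
  have m2 : ((w, (1 : Fin 2)) ∈ MdefT h4n a b c) ↔
      (HVatQ a b (c+1) x y ∨ HVatQ a b (c+1) (x - 1) y) := mem_Mdef1 h4n a b c w
  have m3 : ((w - (0, 1), (1 : Fin 2)) ∈ MdefT h4n a b c) ↔
      (HVatQ a b (c+1) x (y - 1) ∨ HVatQ a b (c+1) (x - 1) (y - 1)) := by
    rw [mem_Mdef1, hsub2, hsub2', qc_sub_one, ← hx, ← hy]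
  have e0 : w ∈ endsT n (w, (0 : Fin 2)) := by simp [endsT]
  have e1 : w ∈ endsT n (w - (1, 0), (0 : Fin 2)) := by
    rw [mem_ends_iff]
    right
    rw [eT_zero, sub_add_cancel]
  have e2 : w ∈ endsT n (w, (1 : Fin 2)) := by simp [endsT]
  have e3 : w ∈ endsT n (w - (0, 1), (1 : Fin 2)) := by
    rw [mem_ends_iff]
    right
    rw [eT_one, sub_add_cancel]
  have key := keyPM
  rcases key a b c x y with ⟨hq, hn1, hn2, hn3⟩ | ⟨hn0, hq, hn2, hn3⟩ |
    ⟨hn0, hn1, hq, hn3⟩ | ⟨hn0, hn1, hn2, hq⟩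
  · refine ⟨(w, 0), ⟨m0.mpr hq, e0⟩, ?_⟩
    rintro ed ⟨hmem, hw⟩
    rcases edge_cases hw with rfl | rfl | rfl | rfl
    · rfl
    · exact absurd (m1.mp hmem) hn1
    · exact absurd (m2.mp hmem) hn2
    · exact absurd (m3.mp hmem) hn3
  · refine ⟨(w - (1, 0), 0), ⟨m1.mpr hq, e1⟩, ?_⟩
    rintro ed ⟨hmem, hw⟩
    rcases edge_cases hw with rfl | rfl | rfl | rfl
    · exact absurd (m0.mp hmem) hn0
    · rfl
    · exact absurd (m2.mp hmem) hn2
    · exact absurd (m3.mp hmem) hn3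
  · refine ⟨(w, 1), ⟨m2.mpr hq, e2⟩, ?_⟩
    rintro ed ⟨hmem, hw⟩
    rcases edge_cases hw with rfl | rfl | rfl | rfl
    · exact absurd (m0.mp hmem) hn0
    · exact absurd (m1.mp hmem) hn1
    · rfl
    · exact absurd (m3.mp hmem) hn3
  · refine ⟨(w - (0, 1), 1), ⟨m3.mpr hq, e3⟩, ?_⟩
    rintro ed ⟨hmem, hw⟩
    rcases edge_cases hw with rfl | rfl | rfl | rfl
    · exact absurd (m0.mp hmem) hn0
    · exact absurd (m1.mp hmem) hn1
    · exact absurd (m2.mp hmem) hn2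
    · rfl

end Mdef

end HQDMT
namespace HQDMT

variable {n : ℕ}

attribute [-instance] Classical.propDecidable in
lemma key2 : ∀ z c : ZMod 2, z = c ∨ z = c + 1 := by decide

attribute [-instance] Classical.propDecidable in
lemma key3 : ∀ a b c : ZMod 2, ∀ x y : ZMod 4,
    (HVatQ a b c x y ↔ HVatQ a b (c+1) (x+2) y) := by decide

attribute [-instance] Classical.propDecidable in
lemma key4 : ∀ a b c : ZMod 2, ∀ x y : ZMod 4,
    (HVatQ a b c x y ↔ HVatQ a b (c+1) x (y+2)) := by decide

attribute [-instance] Classical.propDecidable in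
lemma key5 : ∀ z : ZMod 2, ¬ z = z + 1 := by decide

attribute [-instance] Classical.propDecidable in
lemma key6 : ∀ x : ZMod 4, fQ (x + 2) = fQ x + 1 := by decide

attribute [-instance] Classical.propDecidable in
lemma key7 : ∀ z c : ZMod 2, ¬ z = c → z + 1 = c := by decide

attribute [-instance] Classical.propDecidable in
lemma key8 : ∀ z c : ZMod 2, z + 1 = c → ¬ z = c := by decide

attribute [-instance] Classical.propDecidable in
lemma key9 : ∀ a b c : ZMod 2,
    HVatQ a b c ((a.val : ℕ) : ZMod 4) (((b.val + 2 * c.val : ℕ)) : ZMod 4) := by decide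

attribute [-instance] Classical.propDecidable in
lemma key10 : ∀ a b c a' b' c' : ZMod 2,
    HVatQ a' b' c' ((a.val : ℕ) : ZMod 4) (((b.val + 2 * c.val : ℕ)) : ZMod 4) →
    (a = a' ∧ b = b' ∧ c = c') := by decide

lemma pm_subset_eq {M M' : Set (ET n)} (hM : IsPMT n M) (hM' : IsPMT n M') (hss : M' ⊆ M) :
    M = M' := by
  ext ed
  constructor
  · intro hed
    obtain ⟨ed', hed', _⟩ := hM' ed.1
    have heq := pm_unique hM hed (hss hed'.1) (by simp [endsT]) hed'.2
    rw [heq]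
    exact hed'.1
  · exact fun h => hss h


lemma h2n_of (h4n : 4 ∣ n) : 2 ∣ n := dvd_trans (by norm_num) h4n

section Mdef2
variable (h8 : 8 ≤ n) (h4n : 4 ∣ n)
include h8 h4n

lemma par_qc (x : ZMod n) : f2Q (qc h4n x) = ((x.val : ℕ) : ZMod 2) := by
  haveI : NeZero n := ⟨by omega⟩
  have h24 : (2:ℕ) ∣ 4 := by norm_num
  show (((qc h4n x).val : ℕ) : ZMod 2) = _
  rw [parity_hom h24 (qc h4n x)]
  rw [show (ZMod.castHom h24 (ZMod 2)) (qc h4n x) =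
    ((ZMod.castHom h24 (ZMod 2)).comp (ZMod.castHom h4n (ZMod 4))) x from rfl,
    ZMod.castHom_comp, parity_hom (h2n_of h4n) x]

lemma qc_fst_two (p : VT n) :
    qc h4n ((p + ((2 : ZMod n), (0 : ZMod n))).1) = qc h4n p.1 + 2 := by
  rw [Prod.fst_add]
  show ZMod.castHom h4n (ZMod 4) _ = _
  rw [map_add, map_ofNat]

lemma qc_snd_two_z (p : VT n) :
    qc h4n ((p + ((2 : ZMod n), (0 : ZMod n))).2) = qc h4n p.2 := by
  rw [Prod.snd_add, add_zero]

lemma qc_fst_two_z (p : VT n) :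
    qc h4n ((p + ((0 : ZMod n), (2 : ZMod n))).1) = qc h4n p.1 := by
  rw [Prod.fst_add, add_zero]

lemma qc_snd_two (p : VT n) :
    qc h4n ((p + ((0 : ZMod n), (2 : ZMod n))).2) = qc h4n p.2 + 2 := by
  rw [Prod.snd_add]
  show ZMod.castHom h4n (ZMod 4) _ = _
  rw [map_add, map_ofNat]

lemma Mdef_altgrid (a b c : ZMod 2) : IsAltGridT n (MdefT h4n a b c) := by
  refine ⟨a, b, ?_, ?_⟩
  · intro p hp
    have ha : f2Q (qc h4n p.1) = a := by rw [par_qc h8 h4n]; exact hp.1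
    have hb : f2Q (qc h4n p.2) = b := by rw [par_qc h8 h4n]; exact hp.2
    rcases key2 (fQ (qc h4n p.1) + fQ (qc h4n p.2)) c with h | h
    · exact Or.inl ((hostsH_Mdef h4n a b c p).mpr ⟨ha, hb, h⟩)
    · exact Or.inr ((hostsV_Mdef h4n a b c p).mpr ⟨ha, hb, h⟩)
  · intro p _
    constructor
    · rw [hostsH_Mdef, hostsV_Mdef, qc_fst_two h8 h4n, qc_snd_two_z h8 h4n]
      exact key3 a b c _ _
    · rw [hostsH_Mdef, hostsV_Mdef, qc_fst_two_z h8 h4n, qc_snd_two h8 h4n]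
      exact key4 a b c _ _

/-- the orientation function is forced on the whole sublattice -/
lemma G_of_base {M : Set (ET n)} (hM : IsPMT n M) {a b : ZMod 2}
    (hpar : ∀ p : VT n, onSubT n a b p → HostsParT n M p)
    (halt : ∀ p : VT n, onSubT n a b p →
      ((HostsHT n M p ↔ HostsVT n M (p + (2, 0))) ∧
       (HostsHT n M p ↔ HostsVT n M (p + (0, 2)))))
    {p0 : VT n} (h0 : onSubT n a b p0) {c : ZMod 2}
    (hbase : HostsHT n M p0 ↔ fQ (qc h4n p0.1) + fQ (qc h4n p0.2) = c) :
    ∀ p : VT n, onSubT n a b p →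
      (HostsHT n M p ↔ fQ (qc h4n p.1) + fQ (qc h4n p.2) = c) := by
  have h2n := h2n_of h4n
  intro p hp
  have step1 : ∀ r : VT n,
      (onSubT n a b r ∧ (HostsHT n M r ↔ fQ (qc h4n r.1) + fQ (qc h4n r.2) = c)) →
      (onSubT n a b (r + (2, 0)) ∧ (HostsHT n M (r + (2, 0)) ↔
        fQ (qc h4n (r + (2, 0)).1) + fQ (qc h4n (r + (2, 0)).2) = c)) := by
    rintro r ⟨hr, hiff⟩
    refine ⟨onSub_step1 h8 h2n hr, ?_⟩
    have halt_r := (halt r hr).1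
    have hpar2 := hpar _ (onSub_step1 h8 h2n hr)
    rw [qc_fst_two h8 h4n, qc_snd_two_z h8 h4n, key6, add_right_comm]
    constructor
    · intro hH2
      refine key7 _ _ ?_
      intro hfs
      have hH : HostsHT n M r := hiff.mpr hfs
      exact conf_HV hM hH2 (halt_r.mp hH)
    · intro hfs
      have hnH : ¬ HostsHT n M r := fun hH => key8 _ _ hfs (hiff.mp hH)
      rcases hpar2 with hH2 | hV2
      · exact hH2
      · exact absurd (halt_r.mpr hV2) hnH
  have step2 : ∀ r : VT n,
      (onSubT n a b r ∧ (HostsHT n M r ↔ fQ (qc h4n r.1) + fQ (qc h4n r.2) = c)) →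
      (onSubT n a b (r + (0, 2)) ∧ (HostsHT n M (r + (0, 2)) ↔
        fQ (qc h4n (r + (0, 2)).1) + fQ (qc h4n (r + (0, 2)).2) = c)) := by
    rintro r ⟨hr, hiff⟩
    refine ⟨onSub_step2 h8 h2n hr, ?_⟩
    have halt_r := (halt r hr).2
    have hpar2 := hpar _ (onSub_step2 h8 h2n hr)
    rw [qc_fst_two_z h8 h4n, qc_snd_two h8 h4n, key6]
    rw [← add_assoc]
    constructor
    · intro hH2
      refine key7 _ _ ?_
      intro hfs
      have hH : HostsHT n M r := hiff.mpr hfs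
      exact conf_HV hM hH2 (halt_r.mp hH)
    · intro hfs
      have hnH : ¬ HostsHT n M r := fun hH => key8 _ _ hfs (hiff.mp hH)
      rcases hpar2 with hH2 | hV2
      · exact hH2
      · exact absurd (halt_r.mpr hV2) hnH
  exact (reach h8 h2n step1 step2 ⟨h0, hbase⟩ (hp.1.trans h0.1.symm)
    (hp.2.trans h0.2.symm)).2

lemma altgrid_eq_Mdef {M : Set (ET n)} (hM : IsPMT n M) {a b : ZMod 2}
    (hpar : ∀ p : VT n, onSubT n a b p → HostsParT n M p)
    (halt : ∀ p : VT n, onSubT n a b p →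
      ((HostsHT n M p ↔ HostsVT n M (p + (2, 0))) ∧
       (HostsHT n M p ↔ HostsVT n M (p + (0, 2))))) :
    ∃ c : ZMod 2, M = MdefT h4n a b c := by
  haveI : NeZero n := ⟨by omega⟩
  set p0 : VT n := (((a.val : ℕ) : ZMod n), ((b.val : ℕ) : ZMod n)) with hp0
  have hva : (((a.val : ℕ) : ZMod n)).val = a.val :=
    ZMod.val_cast_of_lt (by have := ZMod.val_lt a; omega)
  have hvb : (((b.val : ℕ) : ZMod n)).val = b.val :=
    ZMod.val_cast_of_lt (by have := ZMod.val_lt b; omega)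
  have h0 : onSubT n a b p0 := by
    constructor
    · show ((p0.1.val : ℕ) : ZMod 2) = a
      rw [hp0]
      simp only [hva]
      exact ZMod.natCast_zmod_val a
    · show ((p0.2.val : ℕ) : ZMod 2) = b
      rw [hp0]
      simp only [hvb]
      exact ZMod.natCast_zmod_val b
  have hGc : ∃ c : ZMod 2, ∀ p : VT n, onSubT n a b p →
      (HostsHT n M p ↔ fQ (qc h4n p.1) + fQ (qc h4n p.2) = c) := by
    rcases hpar p0 h0 with hH | hV
    · refine ⟨fQ (qc h4n p0.1) + fQ (qc h4n p0.2), G_of_base h8 h4n hM hpar halt h0 ?_⟩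
      exact ⟨fun _ => rfl, fun _ => hH⟩
    · refine ⟨fQ (qc h4n p0.1) + fQ (qc h4n p0.2) + 1, G_of_base h8 h4n hM hpar halt h0 ?_⟩
      constructor
      · intro hH
        exact absurd hV (fun hV => conf_HV hM hH hV)
      · intro hfs
        exact absurd hfs (key5 _)
  obtain ⟨c, hG⟩ := hGc
  refine ⟨c, pm_subset_eq hM (Mdef_isPM h4n a b c) ?_⟩
  rintro ⟨u, i⟩ hed
  rcases fin2_cases i with rfl | rfl
  · rw [mem_Mdef0] at hed
    rcases hed with hq | hq
    · have hsu : onSubT n a b u :=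
        ⟨by rw [← par_qc h8 h4n]; exact hq.1, by rw [← par_qc h8 h4n]; exact hq.2.1⟩
      exact ((hG u hsu).mpr hq.2.2).1
    · set q : VT n := u - ((0 : ZMod n), (1 : ZMod n)) with hqdef
      have hq1 : qc h4n q.1 = qc h4n u.1 := by rw [hqdef, Prod.fst_sub, sub_zero]
      have hq2 : qc h4n q.2 = qc h4n u.2 - 1 := by rw [hqdef, Prod.snd_sub, qc_sub_one]
      have hsu : onSubT n a b q := by
        constructor
        · rw [← par_qc h8 h4n, hq1]
          exact hq.1
        · rw [← par_qc h8 h4n, hq2]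
          exact hq.2.1
      have hH : HostsHT n M q := (hG q hsu).mpr (by rw [hq1, hq2]; exact hq.2.2)
      have : q + ((0 : ZMod n), (1 : ZMod n)) = u := sub_add_cancel u _
      rw [← this]
      exact hH.2
  · rw [mem_Mdef1] at hed
    rcases hed with hq | hq
    · have hsu : onSubT n a b u :=
        ⟨by rw [← par_qc h8 h4n]; exact hq.1, by rw [← par_qc h8 h4n]; exact hq.2.1⟩
      have hVu : HostsVT n M u := by
        rcases hpar u hsu with hH | hV
        · exfalso
          have := (hG u hsu).mp hH
          have hc1 : fQ (qc h4n u.1) + fQ (qc h4n u.2) = c + 1 := hq.2.2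
          rw [this] at hc1
          exact key5 c hc1
        · exact hV
      exact hVu.1
    · set q : VT n := u - ((1 : ZMod n), (0 : ZMod n)) with hqdef
      have hq1 : qc h4n q.1 = qc h4n u.1 - 1 := by rw [hqdef, Prod.fst_sub, qc_sub_one]
      have hq2 : qc h4n q.2 = qc h4n u.2 := by rw [hqdef, Prod.snd_sub, sub_zero]
      have hsu : onSubT n a b q := by
        constructor
        · rw [← par_qc h8 h4n, hq1]
          exact hq.1
        · rw [← par_qc h8 h4n, hq2]
          exact hq.2.1
      have hVq : HostsVT n M q := by
        rcases hpar q hsu with hH | hV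
        · exfalso
          have := (hG q hsu).mp hH
          have hc1 : fQ (qc h4n q.1) + fQ (qc h4n q.2) = c + 1 := by
            rw [hq1, hq2]
            exact hq.2.2
          rw [this] at hc1
          exact key5 c hc1
        · exact hV
      have : q + ((1 : ZMod n), (0 : ZMod n)) = u := sub_add_cancel u _
      rw [← this]
      exact hVq.2

lemma Mdef_inj {a b c a' b' c' : ZMod 2} (h : MdefT h4n a b c = MdefT h4n a' b' c') :
    a = a' ∧ b = b' ∧ c = c' := by
  haveI : NeZero n := ⟨by omega⟩
  set p : VT n := (((a.val : ℕ) : ZMod n), ((b.val + 2 * c.val : ℕ) : ZMod n)) with hp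
  have hc1 : qc h4n p.1 = ((a.val : ℕ) : ZMod 4) := by
    show ZMod.castHom h4n (ZMod 4) _ = _
    rw [hp, map_natCast]
  have hc2 : qc h4n p.2 = (((b.val + 2 * c.val : ℕ)) : ZMod 4) := by
    show ZMod.castHom h4n (ZMod 4) _ = _
    rw [hp, map_natCast]
  have hH : HostsHT n (MdefT h4n a b c) p := by
    rw [hostsH_Mdef, hc1, hc2]
    exact key9 a b c
  rw [h] at hH
  rw [hostsH_Mdef, hc1, hc2] at hH
  exact key10 a b c a' b' c' hH

lemma count8 : ({M : Set (ET n) | IsPMT n M ∧ IsAltGridT n M}).ncard = 8 := by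
  haveI : NeZero n := ⟨by omega⟩
  have hset : {M : Set (ET n) | IsPMT n M ∧ IsAltGridT n M} =
      Set.range (fun t : ZMod 2 × ZMod 2 × ZMod 2 => MdefT h4n t.1 t.2.1 t.2.2) := by
    ext M
    constructor
    · rintro ⟨hPM, a, b, hpar, halt⟩
      obtain ⟨c, hc⟩ := altgrid_eq_Mdef h8 h4n hPM hpar halt
      exact ⟨(a, b, c), hc.symm⟩
    · rintro ⟨⟨a, b, c⟩, rfl⟩
      exact ⟨Mdef_isPM h4n a b c, Mdef_altgrid h8 h4n a b c⟩
  have hinj : Set.InjOn (fun t : ZMod 2 × ZMod 2 × ZMod 2 => MdefT h4n t.1 t.2.1 t.2.2)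
      Set.univ := by
    rintro ⟨a, b, c⟩ - ⟨a', b', c'⟩ - h
    obtain ⟨h1, h2, h3⟩ := Mdef_inj h8 h4n h
    rw [Prod.mk.injEq, Prod.mk.injEq]
    exact ⟨h1, h2, h3⟩
  rw [hset, ← Set.image_univ, Set.ncard_image_of_injOn hinj, Set.ncard_univ, Nat.card_prod,
    Nat.card_prod, Nat.card_zmod]

end Mdef2

end HQDMT
namespace HQDMT

/-- For `4 ∣ n`, `n ≥ 8`: there are exactly eight perfect matchings of `G_n`
with exactly `n²/2` flippable pairs; they are precisely the checkerboard-alternating sublattice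
configurations; and every other perfect matching has strictly fewer than `n²/2` flippable
pairs. -/
theorem eight_maximizers (n : ℕ) (h4 : 4 ∣ n) (h8 : 8 ≤ n) :
    ({M : Set (ET n) | IsPMT n M ∧ nflipT n M = n ^ 2 / 2}).ncard = 8 ∧
    {M : Set (ET n) | IsPMT n M ∧ nflipT n M = n ^ 2 / 2} =
      {M : Set (ET n) | IsPMT n M ∧ IsAltGridT n M} ∧
    (∀ M : Set (ET n), IsPMT n M → ¬ IsAltGridT n M → nflipT n M < n ^ 2 / 2) := by
  have h2n : 2 ∣ n := h2n_of h4
  have hseteq : {M : Set (ET n) | IsPMT n M ∧ nflipT n M = n ^ 2 / 2} =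
      {M : Set (ET n) | IsPMT n M ∧ IsAltGridT n M} := by
    ext M
    simp only [Set.mem_setOf_eq]
    constructor
    · rintro ⟨hPM, heq⟩
      exact ⟨hPM, altgrid_of_max h8 h2n hPM heq⟩
    · rintro ⟨hPM, hA⟩
      exact ⟨hPM, nflip_eq_of_altgrid h8 h2n hPM hA⟩
  refine ⟨?_, hseteq, ?_⟩
  · rw [hseteq]
    exact count8 h8 h4
  · intro M hPM hA
    rcases lt_or_eq_of_le (nflip_le h8 hPM) with h | h
    · exact h
    · exact absurd (altgrid_of_max h8 h2n hPM h) hA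

end HQDMT
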